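/- For all distinct points x, y ∈ B²∖{0}, w_{B²}(x,y) > low(x,y), where low(x,y) = |x−y| / min{|x−y*|, |x*−y|} with x* = x/|x|², y* = y/|y|². -/

import Mathlib

open Metric Set

/-- `x̃ = x(2−|x|)/|x|`. -/
noncomputable def tilde (x : ℂ) : ℂ := (((2 - ‖x‖) / ‖x‖ : ℝ) : ℂ) * x

/-- The quasi-metric `w` of the unit disk (on nonzero points). -/
noncomputable def wB (x y : ℂ) : ℝ :=
  ‖x - y‖ / min (‖x - tilde y‖) (‖y - tilde x‖)

/-- The low-function `low(x,y) = |x−y| / min{|x−y*|, |x*−y|}` with `x* = x/|x|²`. -/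
noncomputable def lowB (x y : ℂ) : ℝ :=
  ‖x - y‖ /
    min (‖x - y / ((‖y‖ : ℂ) ^ 2)‖)
        (‖x / ((‖x‖ : ℂ) ^ 2) - y‖)

/-
Both `ỹ` and `y* = y/|y|²` lie on the ray through `y`, beyond the unit circle, at moduli
`2 - |y| < 1/|y|` (the gap is `(1 - |y|)² / |y| > 0`). For a point `x` of the disk the distance
to a point moving outwards along a ray past `|x|` increases, so `|x - ỹ| < |x - y*|`, and
symmetrically `|y - x̃| < |x* - y|`. Hence the denominator of `w` is strictly smaller than that
of `low`, and it is positive because `|ỹ| > 1 > |x|`.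
-/

lemma norm_sub_smul_lt_norm_sub_smul {E : Type*} [NormedAddCommGroup E] [InnerProductSpace ℝ E]
    {x y : E} {s t : ℝ} (hy : y ≠ 0) (hxs : ‖x‖ ≤ s * ‖y‖) (hst : s < t) :
    ‖x - s • y‖ < ‖x - t • y‖ := by
  have hy' : 0 < ‖y‖ := norm_pos_iff.mpr hy
  have hinner : inner ℝ x y ≤ ‖x‖ * ‖y‖ := real_inner_le_norm x y
  have hsq : ‖x - s • y‖ ^ 2 < ‖x - t • y‖ ^ 2 := by
    simp only [norm_sub_sq_real, real_inner_smul_right, norm_smul, Real.norm_eq_abs, mul_pow,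
      sq_abs]
    -- the difference is `(t - s) * ((t + s) * ‖y‖² - 2 ⟪x, y⟫)`
    nlinarith [mul_pos (sub_pos.mpr hst) hy', mul_pos (mul_pos (sub_pos.mpr hst) hy') hy']
  exact lt_of_pow_lt_pow_left₀ 2 (norm_nonneg _) hsq

lemma tilde_eq_smul (y : ℂ) : tilde y = ((2 - ‖y‖) / ‖y‖) • y :=
  Complex.real_smul.symm

lemma div_norm_sq_eq_smul (y : ℂ) : y / (‖y‖ : ℂ) ^ 2 = (‖y‖ ^ 2)⁻¹ • y := by
  rw [Complex.real_smul, div_eq_inv_mul]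
  push_cast
  rfl

lemma norm_tilde {y : ℂ} (hy0 : y ≠ 0) (hy : ‖y‖ ≤ 2) : ‖tilde y‖ = 2 - ‖y‖ := by
  rw [tilde_eq_smul, norm_smul, Real.norm_eq_abs, abs_of_nonneg (by positivity),
    div_mul_cancel₀ _ (norm_ne_zero_iff.mpr hy0)]

lemma norm_sub_tilde_pos {x y : ℂ} (hx : ‖x‖ < 1) (hy0 : y ≠ 0) (hy : ‖y‖ < 1) :
    0 < ‖x - tilde y‖ := by
  have := norm_sub_norm_le (tilde y) x
  rw [norm_tilde hy0 (hy.le.trans one_le_two)] at this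
  rw [norm_sub_rev]
  linarith

lemma norm_sub_tilde_lt_norm_sub_inversion {x y : ℂ} (hx : ‖x‖ ≤ 1) (hy0 : y ≠ 0)
    (hy : ‖y‖ < 1) : ‖x - tilde y‖ < ‖x - y / (‖y‖ : ℂ) ^ 2‖ := by
  have hy' : 0 < ‖y‖ := norm_pos_iff.mpr hy0
  rw [tilde_eq_smul, div_norm_sq_eq_smul]
  refine norm_sub_smul_lt_norm_sub_smul hy0 ?_ ?_
  · rw [div_mul_cancel₀ _ hy'.ne']
    linarith
  · rw [div_lt_iff₀ hy', inv_mul_eq_div, lt_div_iff₀ (by positivity)]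
    nlinarith [mul_pos hy' (pow_pos (sub_pos.mpr hy) 2)]

/-- For all distinct `x, y ∈ B² ∖ {0}`, `w_{B²}(x,y) > low(x,y)`. -/
theorem w_gt_low (x y : ℂ)
    (hx : x ∈ Metric.ball (0 : ℂ) 1) (hx0 : x ≠ 0)
    (hy : y ∈ Metric.ball (0 : ℂ) 1) (hy0 : y ≠ 0) (hxy : x ≠ y) :
    lowB x y < wB x y := by
  rw [mem_ball_zero_iff] at hx hy
  have hxy_lt : ‖x - tilde y‖ < ‖x - y / (‖y‖ : ℂ) ^ 2‖ :=
    norm_sub_tilde_lt_norm_sub_inversion hx.le hy0 hy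
  have hyx_lt : ‖y - tilde x‖ < ‖x / (‖x‖ : ℂ) ^ 2 - y‖ := by
    rw [norm_sub_rev (x / _)]
    exact norm_sub_tilde_lt_norm_sub_inversion hy.le hx0 hx
  exact div_lt_div_of_pos_left (norm_pos_iff.mpr (sub_ne_zero.mpr hxy))
    (lt_min (norm_sub_tilde_pos hx hy0 hy) (norm_sub_tilde_pos hy hx0 hx))
    (min_lt_min hxy_lt hyx_lt)
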